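/- arXiv:1608.04099 — 2 statements merged into one kernel-verified Lean document; each statement's English description precedes it below -/
import Mathlib

section
/- For the pure state |ψ⟩ = α|00⟩ + β|11⟩ with |α|²+|β|²=1 and real α, β ≥ 0, the correlation matrix T of ρ = |ψ⟩⟨ψ| is diag(2αβ, −2αβ, 1), and hence M(ρ) = 1 + 4α²β², so ρ violates the Bell-CHSH bound (M(ρ) > 1) if and only if αβ ≠ 0. -/
open Matrix Kronecker
open scoped ComplexOrder

/-- A 4×4 density matrix: positive semidefinite with trace one. -/
def IsDensity (ρ : Matrix (Fin 4) (Fin 4) ℂ) : Prop :=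
  ρ.PosSemidef ∧ ρ.trace = 1

/-- Kronecker product of two 2×2 matrices as a 4×4 matrix, computational-basis order. -/
def kron (A B : Matrix (Fin 2) (Fin 2) ℂ) : Matrix (Fin 4) (Fin 4) ℂ :=
  Matrix.reindex finProdFinEquiv finProdFinEquiv (A ⊗ₖ B)

/-- The Pauli matrices. -/
noncomputable def pauli : Fin 3 → Matrix (Fin 2) (Fin 2) ℂ
  | 0 => !![0, 1; 1, 0]
  | 1 => !![0, -Complex.I; Complex.I, 0]
  | 2 => !![1, 0; 0, -1]

/-- The correlation matrix of a two-qubit state. -/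
noncomputable def corr (ρ : Matrix (Fin 4) (Fin 4) ℂ) : Matrix (Fin 3) (Fin 3) ℝ :=
  Matrix.of fun i j => ((ρ * kron (pauli i) (pauli j)).trace).re

lemma transpose_mul_self_isHermitian (T : Matrix (Fin 3) (Fin 3) ℝ) :
    (Tᵀ * T).IsHermitian := by
  have h := Matrix.isHermitian_conjTranspose_mul_self T
  simpa [Matrix.conjTranspose_eq_transpose_of_trivial] using h

/-- `M(ρ)`: the sum of the two largest eigenvalues of `T_ρᵀ T_ρ`
(= sum of all three minus the smallest). -/
noncomputable def Mfun (ρ : Matrix (Fin 4) (Fin 4) ℂ) : ℝ :=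
  (∑ i, (transpose_mul_self_isHermitian (corr ρ)).eigenvalues i) -
    Finset.univ.inf' ⟨0, Finset.mem_univ 0⟩
      (transpose_mul_self_isHermitian (corr ρ)).eigenvalues

/-- The sum of the eigenvalues of a real symmetric matrix is its trace. -/
lemma sum_ev_eq_trace {n : Type*} [Fintype n] [DecidableEq n] {A : Matrix n n ℝ}
    (hA : A.IsHermitian) : ∑ i, hA.eigenvalues i = A.trace := by
  rw [hA.trace_eq_sum_eigenvalues]
  simp

/-- Value of `Mfun` for a state whose correlation matrix is `diag(c, -c, 1)`, `0 ≤ c ≤ 1`. -/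
lemma Mfun_eq (ρ : Matrix (Fin 4) (Fin 4) ℂ) (c : ℝ) (hc0 : 0 ≤ c) (hc1 : c ≤ 1)
    (h1 : corr ρ = Matrix.diagonal ![c, -c, 1]) : Mfun ρ = 1 + c ^ 2 := by
  have hAdiag : (corr ρ)ᵀ * corr ρ = Matrix.diagonal ![c ^ 2, c ^ 2, 1] := by
    rw [h1, Matrix.diagonal_transpose, Matrix.diagonal_mul_diagonal]
    ext i j
    fin_cases i <;> fin_cases j <;> simp [Matrix.diagonal] <;> ring
  simp only [Mfun]
  set ev := (transpose_mul_self_isHermitian (corr ρ)).eigenvalues with hev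
  have hs : ∑ i, ev i = 2 * c ^ 2 + 1 := by
    rw [hev, sum_ev_eq_trace, hAdiag]
    simp [Matrix.trace_diagonal, Fin.sum_univ_three]
    ring
  have hsp : spectrum ℝ ((corr ρ)ᵀ * corr ρ) = Set.range ![c ^ 2, c ^ 2, 1] := by
    rw [hAdiag, spectrum_diagonal]
  have hmem : ∀ i, ev i = c ^ 2 ∨ ev i = 1 := by
    intro i
    have hspec := (transpose_mul_self_isHermitian (corr ρ)).eigenvalues_mem_spectrum_real i
    rw [hsp] at hspec
    obtain ⟨j, hj⟩ := hspec
    rw [← hev] at hj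
    fin_cases j <;> simp at hj <;>
      [exact Or.inl hj.symm; exact Or.inl hj.symm; exact Or.inr hj.symm]
  have hle : ∀ i, c ^ 2 ≤ ev i := by
    intro i
    rcases hmem i with h' | h' <;> rw [h']
    nlinarith
  have hinf : ∀ hne : (Finset.univ : Finset (Fin 3)).Nonempty,
      Finset.univ.inf' hne ev = c ^ 2 := by
    intro hne
    refine le_antisymm ?_ (Finset.le_inf' _ _ fun i _ => hle i)
    by_cases hex : ∃ i, ev i = c ^ 2
    · obtain ⟨i, hi⟩ := hex
      exact hi ▸ Finset.inf'_le _ (Finset.mem_univ i)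
    · push_neg at hex
      have hall : ∀ i, ev i = 1 := fun i => (hmem i).resolve_left (hex i)
      have h3 : (3 : ℝ) = 2 * c ^ 2 + 1 := by
        rw [← hs, Fin.sum_univ_three, hall 0, hall 1, hall 2]; norm_num
      have hc2 : c ^ 2 = 1 := by linarith
      calc Finset.univ.inf' hne ev ≤ ev 0 := Finset.inf'_le _ (Finset.mem_univ 0)
        _ = c ^ 2 := by rw [hall 0, hc2]
  rw [hs]
  linarith [hinf ⟨0, Finset.mem_univ 0⟩]

/-- The correlation matrix of `α|00⟩ + β|11⟩` is `diag(2αβ, -2αβ, 1)`. -/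
lemma corr_diag (α β : ℝ) (h : α ^ 2 + β ^ 2 = 1) :
    corr (Matrix.vecMulVec ![(α : ℂ), 0, 0, (β : ℂ)] (star ![(α : ℂ), 0, 0, (β : ℂ)])) =
        Matrix.diagonal ![2 * α * β, -(2 * α * β), 1] := by
  ext i j
  fin_cases i <;> fin_cases j <;>
    simp [corr, kron, pauli, Matrix.trace, Matrix.diag, Matrix.mul_apply, Fin.sum_univ_four,
      Matrix.vecMulVec_apply, Matrix.diagonal, finProdFinEquiv, Fin.divNat, Fin.modNat,
      Fin.val, Fin.isValue, show ((3:Fin 4):ℕ) = 3 from rfl, show ((2:Fin 4):ℕ) = 2 from rfl,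
      show ((1:Fin 4):ℕ) = 1 from rfl, -Matrix.cons_vecMulVec]
  all_goals try ring
  all_goals linear_combination h

/-- for |ψ⟩ = α|00⟩+β|11⟩ with real α,β ≥ 0, α²+β²=1, the correlation matrix
is diag(2αβ, −2αβ, 1), M = 1+4α²β², and Bell-CHSH violation M > 1 holds iff αβ ≠ 0. -/
theorem pure_state_correlation (α β : ℝ) (hα : 0 ≤ α) (hβ : 0 ≤ β) (h : α ^ 2 + β ^ 2 = 1) :
    corr (Matrix.vecMulVec ![(α : ℂ), 0, 0, (β : ℂ)] (star ![(α : ℂ), 0, 0, (β : ℂ)])) =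
        Matrix.diagonal ![2 * α * β, -(2 * α * β), 1] ∧
      Mfun (Matrix.vecMulVec ![(α : ℂ), 0, 0, (β : ℂ)] (star ![(α : ℂ), 0, 0, (β : ℂ)])) =
        1 + 4 * α ^ 2 * β ^ 2 ∧
      (1 < Mfun (Matrix.vecMulVec ![(α : ℂ), 0, 0, (β : ℂ)]
          (star ![(α : ℂ), 0, 0, (β : ℂ)])) ↔ α * β ≠ 0) := by
  have h1 := corr_diag α β h
  have hc0 : (0 : ℝ) ≤ 2 * α * β := by positivity
  have hc1 : 2 * α * β ≤ 1 := by nlinarith [sq_nonneg (α - β)]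
  have hM := Mfun_eq _ (2 * α * β) hc0 hc1 h1
  have hM' : Mfun (Matrix.vecMulVec ![(α : ℂ), 0, 0, (β : ℂ)]
      (star ![(α : ℂ), 0, 0, (β : ℂ)])) = 1 + 4 * α ^ 2 * β ^ 2 := by rw [hM]; ring
  refine ⟨h1, hM', ?_⟩
  rw [hM']
  constructor
  · intro hlt hab
    have h0 : α ^ 2 * β ^ 2 = 0 := by nlinarith
    nlinarith
  · intro hab
    have hpos : 0 < (α * β) ^ 2 := by positivity
    nlinarith
end

section
/- For every two-qubit density matrix ρ, M(ρ) ≤ 3, and for every pure state ρ = |ψ⟩⟨ψ| one has M(ρ) ≤ 2; consequently, for the Werner state σ_w = p|ψ⁻⟩⟨ψ⁻| + ((1−p)/4)I₄ with 0 ≤ p ≤ 1/√2, M(U σ_w U*) = p² M(U|ψ⁻⟩⟨ψ⁻|U*) ≤ 2p² ≤ 1 for every unitary U, i.e. σ_w is absolutely Bell-CHSH local. -/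
open Matrix Kronecker
open scoped ComplexOrder
open scoped Pointwise

noncomputable def singlet : Fin 4 → ℂ := ![0, ((Real.sqrt 2)⁻¹ : ℝ), -((Real.sqrt 2)⁻¹ : ℝ), 0]

noncomputable def singletProj : Matrix (Fin 4) (Fin 4) ℂ :=
  Matrix.vecMulVec singlet (star singlet)

noncomputable def werner (p : ℝ) : Matrix (Fin 4) (Fin 4) ℂ :=
  (p : ℂ) • singletProj + ((((1 - p) / 4 : ℝ)) : ℂ) • 1

----------------------------------------------------------------
-- auxiliary lemmas
----------------------------------------------------------------

lemma aux_eig_congr {A A' : Matrix (Fin 3) (Fin 3) ℝ} (h : A.IsHermitian)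
    (h' : A'.IsHermitian) (hAA : A = A') : h.eigenvalues = h'.eigenvalues := by
  subst hAA; rfl

lemma aux_sum_eig {A : Matrix (Fin 3) (Fin 3) ℝ} (h : A.IsHermitian) :
    ∑ i, h.eigenvalues i = A.trace := by
  conv_rhs => rw [h.spectral_theorem]
  rw [Unitary.conjStarAlgAut_apply, Matrix.trace_mul_cycle]
  simp [Matrix.trace_diagonal]

lemma aux_trace_re_nonneg {N : Matrix (Fin 4) (Fin 4) ℂ} (hN : N.PosSemidef) :
    0 ≤ N.trace.re := by
  have h : ∀ i, 0 ≤ (N i i).re := by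
    intro i
    have := hN.re_dotProduct_nonneg (Pi.single i 1)
    simpa [dotProduct, Matrix.mulVec, Pi.single_apply, Finset.sum_ite_eq] using this
  simp only [Matrix.trace, Matrix.diag, Complex.re_sum]
  exact Finset.sum_nonneg fun i _ => h i

lemma kron_mul_kron (A B C D : Matrix (Fin 2) (Fin 2) ℂ) :
    kron A B * kron C D = kron (A * C) (B * D) := by
  simp only [kron, Matrix.reindex_apply, Matrix.submatrix_mul_equiv, Matrix.mul_kronecker_mul]

lemma kron_one_one : kron 1 1 = (1 : Matrix (Fin 4) (Fin 4) ℂ) := by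
  simp [kron, Matrix.one_kronecker_one]

lemma kron_conjTranspose (A B : Matrix (Fin 2) (Fin 2) ℂ) :
    (kron A B)ᴴ = kron Aᴴ Bᴴ := by
  simp only [kron, Matrix.reindex_apply, Matrix.conjTranspose_submatrix]
  ext ⟨i, j⟩ ⟨k, l⟩
  simp [Matrix.kroneckerMap_apply, Matrix.conjTranspose_apply, mul_comm]

lemma kron_smul_smul (a b : ℂ) (A B : Matrix (Fin 2) (Fin 2) ℂ) :
    kron (a • A) (b • B) = (a * b) • kron A B := by
  simp only [kron, Matrix.smul_kronecker, Matrix.kronecker_smul, Matrix.reindex_apply,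
    Matrix.submatrix_smul, smul_smul, mul_comm b a, Pi.smul_apply]

lemma kron_add_left (A A' B : Matrix (Fin 2) (Fin 2) ℂ) :
    kron (A + A') B = kron A B + kron A' B := by
  simp [kron, Matrix.add_kronecker, Matrix.submatrix_add]

lemma kron_add_right (A B B' : Matrix (Fin 2) (Fin 2) ℂ) :
    kron A (B + B') = kron A B + kron A B' := by
  simp [kron, Matrix.kronecker_add, Matrix.submatrix_add]

lemma kron_sum_left {s : Finset (Fin 3)} (f : Fin 3 → Matrix (Fin 2) (Fin 2) ℂ)
    (B : Matrix (Fin 2) (Fin 2) ℂ) :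
    kron (∑ i ∈ s, f i) B = ∑ i ∈ s, kron (f i) B := by
  classical
  induction s using Finset.induction with
  | empty => simp [kron, Matrix.zero_kronecker]
  | insert _ _ h ih => rw [Finset.sum_insert h, Finset.sum_insert h, ← ih, kron_add_left]

lemma kron_sum_right (A : Matrix (Fin 2) (Fin 2) ℂ) {s : Finset (Fin 3)}
    (f : Fin 3 → Matrix (Fin 2) (Fin 2) ℂ) :
    kron A (∑ j ∈ s, f j) = ∑ j ∈ s, kron A (f j) := by
  classical
  induction s using Finset.induction with
  | empty => simp [kron, Matrix.kronecker_zero]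
  | insert _ _ h ih => rw [Finset.sum_insert h, Finset.sum_insert h, ← ih, kron_add_right]

noncomputable def pv (x : Fin 3 → ℝ) : Matrix (Fin 2) (Fin 2) ℂ := ∑ i, (x i : ℂ) • pauli i

lemma pv_eq (x : Fin 3 → ℝ) :
    pv x = !![(x 2 : ℂ), x 0 - x 1 * Complex.I; x 0 + x 1 * Complex.I, -(x 2 : ℂ)] := by
  ext i j
  fin_cases i <;> fin_cases j <;>
    simp [pv, Fin.sum_univ_three, pauli] <;> ring

lemma pv_conjTranspose (x : Fin 3 → ℝ) : (pv x)ᴴ = pv x := by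
  rw [pv_eq]
  ext i j
  fin_cases i <;> fin_cases j <;> simp [Matrix.conjTranspose_apply] <;> ring

lemma pv_mul_self (x : Fin 3 → ℝ) (hx : x ⬝ᵥ x = 1) : pv x * pv x = 1 := by
  have h : ((x 0 : ℂ)) * x 0 + x 1 * x 1 + x 2 * x 2 = 1 := by
    have : ((x ⬝ᵥ x : ℝ) : ℂ) = 1 := by rw [hx]; norm_num
    simpa [dotProduct, Fin.sum_univ_three] using this
  rw [pv_eq]
  ext i j
  fin_cases i <;> fin_cases j <;>
    simp [Matrix.mul_apply, Fin.sum_univ_two, Matrix.one_apply] <;>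
    ring_nf <;>
    rw [Complex.I_sq] <;>
    linear_combination h

lemma aux_corr_bound (ρ : Matrix (Fin 4) (Fin 4) ℂ) (hρ : IsDensity ρ)
    (x y : Fin 3 → ℝ) (hx : x ⬝ᵥ x = 1) (hy : y ⬝ᵥ y = 1) :
    x ⬝ᵥ (corr ρ *ᵥ y) ≤ 1 := by
  set K := kron (pv x) (pv y) with hK
  have hKK : K * K = 1 := by
    rw [hK, kron_mul_kron, pv_mul_self x hx, pv_mul_self y hy, kron_one_one]
  have hKH : Kᴴ = K := by
    rw [hK, kron_conjTranspose, pv_conjTranspose, pv_conjTranspose]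
  have hM : (1 - K) * (1 - K)ᴴ = (2 : ℂ) • (1 - K) := by
    rw [Matrix.conjTranspose_sub, Matrix.conjTranspose_one, hKH]
    have h1 : (1 - K) * (1 - K) = 1 - K - K + K * K := by noncomm_ring
    rw [h1, hKK]
    module
  have hpos : 0 ≤ ((ρ * ((1 - K) * (1 - K)ᴴ)).trace).re := by
    have hps : ((1 - K)ᴴ * ρ * (1 - K)).PosSemidef := hρ.1.conjTranspose_mul_mul_same (1 - K)
    have h0 := aux_trace_re_nonneg hps
    have htr : (ρ * ((1 - K) * (1 - K)ᴴ)).trace = ((1 - K)ᴴ * ρ * (1 - K)).trace := by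
      rw [Matrix.trace_mul_comm, Matrix.mul_assoc, Matrix.trace_mul_comm, Matrix.mul_assoc]
    rw [htr]; exact h0
  have h2 : 0 ≤ ((ρ * (1 - K)).trace).re := by
    have hs : ρ * ((1 - K) * (1 - K)ᴴ) = (2 : ℂ) • (ρ * (1 - K)) := by
      rw [hM, mul_smul_comm]
    rw [hs, Matrix.trace_smul] at hpos
    have : ((2 : ℂ) • (ρ * (1 - K)).trace).re = 2 * ((ρ * (1 - K)).trace).re := by
      simp [smul_eq_mul, Complex.mul_re]
    rw [this] at hpos
    linarith
  have h3 : ((ρ * K).trace).re ≤ 1 := by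
    have hexp : (ρ * (1 - K)).trace = ρ.trace - (ρ * K).trace := by
      rw [Matrix.mul_sub, Matrix.mul_one, Matrix.trace_sub]
    rw [hexp, hρ.2] at h2
    simp only [Complex.sub_re, Complex.one_re] at h2
    linarith
  have hid : x ⬝ᵥ (corr ρ *ᵥ y) = ((ρ * K).trace).re := by
    have hKsum : K = ∑ i, ∑ j, ((x i * y j : ℝ) : ℂ) • kron (pauli i) (pauli j) := by
      rw [hK]
      show kron (∑ i, (x i : ℂ) • pauli i) (pv y) = _
      rw [kron_sum_left]
      refine Finset.sum_congr rfl fun i _ => ?_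
      show kron ((x i : ℂ) • pauli i) (∑ j, (y j : ℂ) • pauli j) = _
      rw [kron_sum_right]
      refine Finset.sum_congr rfl fun j _ => ?_
      rw [kron_smul_smul]
      push_cast
      ring_nf
    rw [hKsum]
    simp only [Matrix.mul_sum, mul_smul_comm, Matrix.trace_sum, Matrix.trace_smul,
      Complex.re_sum]
    simp only [smul_eq_mul, Complex.ofReal_mul, Complex.re_ofReal_mul]
    simp only [dotProduct, Matrix.mulVec, corr, Matrix.of_apply, dotProduct,
      Finset.mul_sum]
    rw [Finset.sum_congr rfl fun i _ => Finset.sum_congr rfl fun j _ => ?_]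
    rw [← Complex.ofReal_mul, Complex.re_ofReal_mul]
    ring
  rw [hid]; exact h3

lemma aux_eig_le_one (ρ : Matrix (Fin 4) (Fin 4) ℂ) (hρ : IsDensity ρ) (i : Fin 3) :
    (transpose_mul_self_isHermitian (corr ρ)).eigenvalues i ≤ 1 := by
  set T := corr ρ with hT
  set hH := transpose_mul_self_isHermitian T with hHdef
  set v : Fin 3 → ℝ := ⇑(hH.eigenvectorBasis i) with hv
  have hmv : (Tᵀ * T) *ᵥ v = hH.eigenvalues i • v := hH.mulVec_eigenvectorBasis i
  have hunit : v ⬝ᵥ v = 1 := by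
    have hn : ‖hH.eigenvectorBasis i‖ = 1 := hH.eigenvectorBasis.orthonormal.1 i
    have hinner : (inner ℝ (hH.eigenvectorBasis i) (hH.eigenvectorBasis i) : ℝ) = 1 := by
      rw [real_inner_self_eq_norm_sq, hn]; norm_num
    rw [dotProduct]
    rw [PiLp.inner_apply] at hinner
    simpa [hv, sq] using hinner
  have heig : hH.eigenvalues i = (T *ᵥ v) ⬝ᵥ (T *ᵥ v) := by
    have h1 : v ⬝ᵥ ((Tᵀ * T) *ᵥ v) = hH.eigenvalues i := by
      rw [hmv, dotProduct_smul, smul_eq_mul, hunit, mul_one]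
    rw [← h1, ← Matrix.mulVec_mulVec, Matrix.dotProduct_mulVec, Matrix.vecMul_transpose]
  set w := T *ᵥ v with hw
  have hwnn : 0 ≤ w ⬝ᵥ w := Finset.sum_nonneg fun k _ => mul_self_nonneg _
  rcases eq_or_lt_of_le hwnn with h0 | hpos
  · rw [heig, ← h0]; norm_num
  · set s := Real.sqrt (w ⬝ᵥ w) with hs
    have hspos : 0 < s := Real.sqrt_pos.mpr hpos
    have hsq' : s * s = w ⬝ᵥ w := by rw [hs, Real.mul_self_sqrt]; linarith
    have hxunit : (s⁻¹ • w) ⬝ᵥ (s⁻¹ • w) = 1 := by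
      rw [smul_dotProduct, dotProduct_smul, smul_eq_mul, smul_eq_mul, ← hsq']
      field_simp
    have hb := aux_corr_bound ρ hρ (s⁻¹ • w) v hxunit hunit
    have hval : (s⁻¹ • w) ⬝ᵥ (T *ᵥ v) = s := by
      rw [← hw, smul_dotProduct, smul_eq_mul, ← hsq']
      field_simp
    rw [hval] at hb
    rw [heig, ← hsq']
    nlinarith

lemma aux_Mfun_le_two (ρ : Matrix (Fin 4) (Fin 4) ℂ) (hρ : IsDensity ρ) : Mfun ρ ≤ 2 := by
  set hH := transpose_mul_self_isHermitian (corr ρ)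
  obtain ⟨i0, _, hi0⟩ := Finset.exists_mem_eq_inf' (⟨0, Finset.mem_univ 0⟩ :
    (Finset.univ : Finset (Fin 3)).Nonempty) hH.eigenvalues
  have hsplit : ∑ i, hH.eigenvalues i =
      hH.eigenvalues i0 + ∑ i ∈ Finset.univ.erase i0, hH.eigenvalues i :=
    (Finset.add_sum_erase _ _ (Finset.mem_univ i0)).symm
  have hbound : ∑ i ∈ Finset.univ.erase i0, hH.eigenvalues i ≤ 2 := by
    have hcard : (Finset.univ.erase i0).card = 2 := by
      rw [Finset.card_erase_of_mem (Finset.mem_univ i0)]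
      simp
    calc ∑ i ∈ Finset.univ.erase i0, hH.eigenvalues i
        ≤ ∑ _i ∈ Finset.univ.erase i0, (1 : ℝ) :=
          Finset.sum_le_sum fun i _ => aux_eig_le_one ρ hρ i
      _ = 2 := by rw [Finset.sum_const, hcard]; norm_num
  rw [Mfun, hi0]
  rw [hsplit]
  linarith

lemma aux_pure_density (ψ : Fin 4 → ℂ) (hψ : ∑ i, ‖ψ i‖ ^ 2 = 1) :
    IsDensity (Matrix.vecMulVec ψ (star ψ)) := by
  constructor
  · exact Matrix.posSemidef_vecMulVec_self_star ψ
  · have : (Matrix.vecMulVec ψ (star ψ)).trace = ∑ i, ψ i * star (ψ i) := by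
      simp [Matrix.trace, Matrix.diag, Matrix.vecMulVec_apply]
    rw [this]
    have h2 : ∀ i, ψ i * star (ψ i) = ((‖ψ i‖ ^ 2 : ℝ) : ℂ) := by
      intro i
      rw [RCLike.star_def, Complex.mul_conj, Complex.sq_norm]
    calc ∑ i, ψ i * star (ψ i) = ∑ i, ((‖ψ i‖ ^ 2 : ℝ) : ℂ) := by
          exact Finset.sum_congr rfl fun i _ => h2 i
      _ = ((∑ i, ‖ψ i‖ ^ 2 : ℝ) : ℂ) := by push_cast; ring
      _ = 1 := by rw [hψ]; norm_num

lemma aux_conj_density (ρ : Matrix (Fin 4) (Fin 4) ℂ) (hρ : IsDensity ρ)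
    (U : Matrix (Fin 4) (Fin 4) ℂ) (hU : U ∈ Matrix.unitaryGroup (Fin 4) ℂ) :
    IsDensity (U * ρ * Uᴴ) := by
  constructor
  · exact hρ.1.mul_mul_conjTranspose_same U
  · have h1 : Uᴴ * U = 1 := by
      have := (Unitary.mem_iff.mp hU).1
      rwa [Matrix.star_eq_conjTranspose] at this
    rw [Matrix.trace_mul_cycle, h1, Matrix.one_mul, hρ.2]


lemma aux_corr_add (ρ σ : Matrix (Fin 4) (Fin 4) ℂ) : corr (ρ + σ) = corr ρ + corr σ := by
  ext i j
  simp [corr, Matrix.add_mul, Matrix.trace_add]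

lemma aux_corr_smul (c : ℝ) (ρ : Matrix (Fin 4) (Fin 4) ℂ) :
    corr ((c : ℂ) • ρ) = c • corr ρ := by
  ext i j
  simp [corr, Matrix.smul_mul, Matrix.trace_smul, Complex.re_ofReal_mul]

lemma aux_trace_pauli (i : Fin 3) : (pauli i).trace = 0 := by
  fin_cases i <;> simp [pauli, Matrix.trace_fin_two]

lemma aux_corr_one : corr (1 : Matrix (Fin 4) (Fin 4) ℂ) = 0 := by
  ext i j
  have h : (kron (pauli i) (pauli j)).trace = (pauli i).trace * (pauli j).trace := by
    rw [kron, Matrix.reindex_apply]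
    rw [show ((pauli i ⊗ₖ pauli j).submatrix ⇑finProdFinEquiv.symm ⇑finProdFinEquiv.symm).trace
        = (pauli i ⊗ₖ pauli j).trace from
      Fintype.sum_equiv finProdFinEquiv.symm _ _ fun k => rfl]
    rw [Matrix.trace_kronecker]
  simp [corr, h, aux_trace_pauli]

lemma aux_inf_scale (B : Matrix (Fin 3) (Fin 3) ℝ) (hB : B.IsHermitian) (d : ℝ) (hd : 0 ≤ d)
    (hdB : (d • B).IsHermitian) :
    Finset.univ.inf' ⟨0, Finset.mem_univ 0⟩ hdB.eigenvalues =
      d * Finset.univ.inf' ⟨0, Finset.mem_univ 0⟩ hB.eigenvalues := by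
  rcases eq_or_lt_of_le hd with h0 | hdpos
  · subst h0
    have hz : ∀ i, hdB.eigenvalues i = 0 := by
      intro i
      have hm := hdB.eigenvalues_mem_spectrum_real i
      rw [show spectrum ℝ ((0 : ℝ) • B) = {0} by rw [zero_smul, spectrum.zero_eq]] at hm
      simpa using hm
    have h1 : Finset.univ.inf' ⟨0, Finset.mem_univ 0⟩ hdB.eigenvalues = 0 := by
      obtain ⟨i0, _, hi0⟩ := Finset.exists_mem_eq_inf' (⟨0, Finset.mem_univ 0⟩ :
        (Finset.univ : Finset (Fin 3)).Nonempty) hdB.eigenvalues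
      rw [hi0, hz i0]
    rw [h1, zero_mul]
  · have hspec : spectrum ℝ (d • B) = d • spectrum ℝ B := by
      have := spectrum.unit_smul_eq_smul (R := ℝ) B (Units.mk0 d hdpos.ne')
      simpa [Units.smul_def] using this
    have hr1 : Set.range hdB.eigenvalues = spectrum ℝ (d • B) :=
      (hdB.spectrum_real_eq_range_eigenvalues).symm
    have hr2 : Set.range hB.eigenvalues = spectrum ℝ B :=
      (hB.spectrum_real_eq_range_eigenvalues).symm
    apply le_antisymm
    · obtain ⟨j0, _, hj0⟩ := Finset.exists_mem_eq_inf' (⟨0, Finset.mem_univ 0⟩ :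
        (Finset.univ : Finset (Fin 3)).Nonempty) hB.eigenvalues
      have hmem : d * hB.eigenvalues j0 ∈ spectrum ℝ (d • B) := by
        rw [hspec]
        exact ⟨hB.eigenvalues j0, by rw [← hr2]; exact ⟨j0, rfl⟩, by simp [smul_eq_mul]⟩
      rw [← hr1] at hmem
      obtain ⟨i, hi⟩ := hmem
      rw [hj0]
      calc Finset.univ.inf' _ hdB.eigenvalues ≤ hdB.eigenvalues i :=
            Finset.inf'_le _ (Finset.mem_univ i)
        _ = d * hB.eigenvalues j0 := hi
    · obtain ⟨i0, _, hi0⟩ := Finset.exists_mem_eq_inf' (⟨0, Finset.mem_univ 0⟩ :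
        (Finset.univ : Finset (Fin 3)).Nonempty) hdB.eigenvalues
      have hmem : hdB.eigenvalues i0 ∈ spectrum ℝ (d • B) := by
        rw [← hr1]; exact ⟨i0, rfl⟩
      rw [hspec] at hmem
      obtain ⟨μ, hμmem, hμ⟩ := hmem
      rw [← hr2] at hμmem
      obtain ⟨j, hj⟩ := hμmem
      rw [hi0, ← hμ]
      simp only [smul_eq_mul]
      rw [← hj]
      have : Finset.univ.inf' ⟨0, Finset.mem_univ 0⟩ hB.eigenvalues ≤ hB.eigenvalues j :=
        Finset.inf'_le _ (Finset.mem_univ j)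
      nlinarith

lemma aux_Mfun_of_corr_smul (ρ σ : Matrix (Fin 4) (Fin 4) ℂ) (c : ℝ) (hc : 0 ≤ c)
    (h : corr ρ = c • corr σ) : Mfun ρ = c ^ 2 * Mfun σ := by
  set S := corr σ with hS
  have hTT : (corr ρ)ᵀ * corr ρ = (c ^ 2) • (Sᵀ * S) := by
    rw [h, Matrix.transpose_smul, Matrix.smul_mul, Matrix.mul_smul, smul_smul, sq]
  have hd : (0 : ℝ) ≤ c ^ 2 := sq_nonneg c
  have hdB : ((c ^ 2) • (Sᵀ * S)).IsHermitian := hTT ▸ transpose_mul_self_isHermitian (corr ρ)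
  have heig : (transpose_mul_self_isHermitian (corr ρ)).eigenvalues = hdB.eigenvalues :=
    aux_eig_congr _ _ hTT
  have hsum : ∑ i, hdB.eigenvalues i =
      c ^ 2 * ∑ i, (transpose_mul_self_isHermitian S).eigenvalues i := by
    rw [aux_sum_eig hdB, aux_sum_eig (transpose_mul_self_isHermitian S),
      Matrix.trace_smul, smul_eq_mul]
  have hinf := aux_inf_scale (Sᵀ * S) (transpose_mul_self_isHermitian S) (c ^ 2) hd hdB
  rw [Mfun, Mfun, heig, hsum, hinf]
  ring

lemma aux_corr_conj_werner (p : ℝ) (U : Matrix (Fin 4) (Fin 4) ℂ)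
    (hU : U ∈ Matrix.unitaryGroup (Fin 4) ℂ) :
    corr (U * werner p * Uᴴ) = p • corr (U * singletProj * Uᴴ) := by
  have hUU : U * Uᴴ = 1 := by
    have := (Unitary.mem_iff.mp hU).2
    rwa [Matrix.star_eq_conjTranspose] at this
  have hsplit : U * werner p * Uᴴ =
      (p : ℂ) • (U * singletProj * Uᴴ) + (((1 - p) / 4 : ℝ) : ℂ) • (1 : Matrix (Fin 4) (Fin 4) ℂ) := by
    rw [werner, Matrix.mul_add, Matrix.add_mul, mul_smul_comm, mul_smul_comm,
      Matrix.smul_mul, Matrix.smul_mul, Matrix.mul_one, hUU]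
  rw [hsplit, aux_corr_add, aux_corr_smul, aux_corr_smul, aux_corr_one]
  simp

/-- M ≤ 3 for all states, M ≤ 2 for pure states, and the Werner state with
0 ≤ p ≤ 1/√2 is absolutely Bell-CHSH local. -/
theorem werner_absolutely_local :
    (∀ ρ : Matrix (Fin 4) (Fin 4) ℂ, IsDensity ρ → Mfun ρ ≤ 3) ∧
      (∀ ψ : Fin 4 → ℂ, ∑ i, ‖ψ i‖ ^ 2 = 1 →
        Mfun (Matrix.vecMulVec ψ (star ψ)) ≤ 2) ∧
      ∀ p : ℝ, 0 ≤ p → p ≤ (Real.sqrt 2)⁻¹ →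
        ∀ U ∈ Matrix.unitaryGroup (Fin 4) ℂ,
          Mfun (U * werner p * Uᴴ) = p ^ 2 * Mfun (U * singletProj * Uᴴ) ∧
            Mfun (U * werner p * Uᴴ) ≤ 2 * p ^ 2 ∧ Mfun (U * werner p * Uᴴ) ≤ 1 := by
  have hsinglet : ∑ i, ‖singlet i‖ ^ 2 = 1 := by
    have h2 : (Real.sqrt 2)⁻¹ ^ 2 = 2⁻¹ := by
      rw [inv_pow, Real.sq_sqrt] <;> norm_num
    simp [singlet, Fin.sum_univ_four, Complex.norm_real, Real.norm_eq_abs, abs_of_nonneg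
      (inv_nonneg.mpr (Real.sqrt_nonneg 2)), sq_abs, h2]
    norm_num
  refine ⟨?_, ?_, ?_⟩
  · intro ρ hρ
    linarith [aux_Mfun_le_two ρ hρ]
  · intro ψ hψ
    exact aux_Mfun_le_two _ (aux_pure_density ψ hψ)
  · intro p hp0 hp U hU
    have hsd : IsDensity (U * singletProj * Uᴴ) :=
      aux_conj_density _ (aux_pure_density singlet hsinglet) U hU
    have heq : Mfun (U * werner p * Uᴴ) = p ^ 2 * Mfun (U * singletProj * Uᴴ) :=
      aux_Mfun_of_corr_smul _ _ p hp0 (aux_corr_conj_werner p U hU)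
    have h2 : Mfun (U * singletProj * Uᴴ) ≤ 2 := aux_Mfun_le_two _ hsd
    have hp2 : p ^ 2 ≤ 1 / 2 := by
      have := pow_le_pow_left₀ hp0 hp 2
      rw [inv_pow, Real.sq_sqrt (by norm_num : (0:ℝ) ≤ 2)] at this
      linarith
    refine ⟨heq, ?_, ?_⟩
    · rw [heq]
      nlinarith [sq_nonneg p]
    · rw [heq]
      nlinarith [sq_nonneg p]
end
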